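/- arXiv:2411.16695 — 2 statements merged into one kernel-verified Lean document; each statement's English description precedes it below -/
import Mathlib

section
/- Let n be a positive natural number. Let J : ℕ → Matrix (Fin n) (Fin n) ℝ be a sequence of diagonal matrices, let R̂ : ℕ → Matrix (Fin n) (Fin n) ℝ, and define R : ℕ → (Fin n → (Fin n × Fin n) → ℝ) by R(t) k (i,j) = (if k = i then R̂(t) i j else 0). Let γ : ℕ → (Fin n → (Fin n × Fin n) → ℝ) satisfy γ(0) = 0 and the sensitivity recursion γ(t) k (i,j) = Σ_m J(t) k m · γ(t−1) m (i,j) + R(t) k (i,j) for all t ≥ 1. Then there exists Γ : ℕ → Matrix (Fin n) (Fin n) ℝ with Γ(0) = 0 and Γ(t) i j = J(t) i i · Γ(t−1) i j + R̂(t) i j, such that for all t, k, i, j: γ(t) k (i,j) = (if k = i then Γ(t) i j else 0). -/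
/-- Two-point interaction property (Appendix D): with diagonal Jacobians `J t` and
instantaneous terms supported on `k = i`, the RTRL sensitivity tensor `γ` collapses to
an `n × n` matrix `Γ` satisfying the Recurrent Forward Propagation recursion. -/
theorem two_point_interaction_structure
    (n : ℕ) (hn : 0 < n)
    (J : ℕ → Matrix (Fin n) (Fin n) ℝ) (hJ : ∀ t, (J t).IsDiag)
    (Rhat : ℕ → Matrix (Fin n) (Fin n) ℝ)
    (γ : ℕ → Fin n → Fin n × Fin n → ℝ)
    (hγ0 : γ 0 = 0)
    (hγ : ∀ t, 1 ≤ t → ∀ (k i j : Fin n),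
      γ t k (i, j) =
        (∑ m, J t k m * γ (t - 1) m (i, j)) + (if k = i then Rhat t i j else 0)) :
    ∃ Γ : ℕ → Matrix (Fin n) (Fin n) ℝ,
      Γ 0 = 0 ∧
      (∀ t, 1 ≤ t → ∀ i j, Γ t i j = J t i i * Γ (t - 1) i j + Rhat t i j) ∧
      (∀ t (k i j : Fin n), γ t k (i, j) = if k = i then Γ t i j else 0) := by
  -- key: sum collapses since J diagonal
  have hsum : ∀ t (k i j : Fin n), 1 ≤ t →
      γ t k (i, j) = J t k k * γ (t-1) k (i, j) + (if k = i then Rhat t i j else 0) := by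
    intro t k i j ht
    rw [hγ t ht k i j]
    congr 1
    rw [Finset.sum_eq_single k]
    · intro m _ hm
      rw [hJ t (Ne.symm hm), zero_mul]
    · intro h; exact absurd (Finset.mem_univ k) h
  have hcollapse : ∀ t (k i j : Fin n), γ t k (i, j) = if k = i then γ t i (i, j) else 0 := by
    intro t
    induction t with
    | zero => intro k i j; simp [hγ0]
    | succ t ih =>
      intro k i j
      have h1 : 1 ≤ t + 1 := Nat.le_add_left 1 t
      rw [hsum (t+1) k i j h1, hsum (t+1) i i j h1]
      simp only [Nat.add_sub_cancel]
      rw [ih k i j]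
      by_cases hk : k = i <;> simp [hk]
  refine ⟨fun t i j => γ t i (i, j), ?_, ?_, ?_⟩
  · funext i j; simp [hγ0]
  · intro t ht i j
    have := hsum t i i j ht
    simpa using this
  · intro t k i j; exact hcollapse t k i j
end

section
/- Let T, d_H, d_L, d_A be positive natural numbers, h : ZMod T → (Fin d_H → ℝ), c : ZMod T → (Fin d_L → ℝ), W_A ∈ Matrix (Fin d_A) (Fin d_L) ℝ, W_Gh ∈ Matrix (Fin d_H) (Fin d_H) ℝ, and λ₁ > 0. Define E(W_Ga) = (λ₁/2)·(1/T) Σ_t ‖h(t) − W_Gh.mulVec(h(t−1)) − W_Ga.mulVec(W_A.mulVec(c(t−1)))‖² for W_Ga ∈ Matrix (Fin d_H) (Fin d_A) ℝ. Then the gradient of E with respect to W_Ga equals λ₁ · (W_Ga * W_A * R_cL * W_Aᵀ − P * W_Aᵀ + W_Gh * Q * W_Aᵀ), where R_cL = (1/T) Σ_t c(t) c(t)ᵀ, P = (1/T) Σ_t h(t) c(t−1)ᵀ, and Q = (1/T) Σ_t h(t) c(t)ᵀ (outer products, indices cyclic mod T). -/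
attribute [local instance] Matrix.normedAddCommGroup Matrix.normedSpace
open scoped Matrix

/-!
With `a t = W_A c(t-1)` and `b t = h t - W_Gh h(t-1)`, the loss is `λ₁/(2T)` times the
least-squares functional `W ↦ ∑ₜ ‖b t - W a t‖²`, whose derivative in the direction `V` is
`-2 ∑ₜ ⟪b t - W a t, V a t⟫`. Evaluating at the matrix units gives the gradient
`2 ∑ₜ (W a t - b t) (a t)ᵀ`, and re-indexing the cyclic sums by `t ↦ t + 1` turns these
outer products into `R_cL`, `P` and `Q`.
-/

open Matrix

section LeastSquares

variable {ι m n : Type*} [Fintype ι] [Fintype m] [Fintype n]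

noncomputable def matrixGradient [DecidableEq m] [DecidableEq n] (E : Matrix m n ℝ → ℝ)
    (W : Matrix m n ℝ) : Matrix m n ℝ :=
  of fun i j => fderiv ℝ E W (single i j 1)

theorem matrixGradient_const_mul [DecidableEq m] [DecidableEq n] {E : Matrix m n ℝ → ℝ}
    {W : Matrix m n ℝ} (hE : DifferentiableAt ℝ E W) (r : ℝ) :
    matrixGradient (fun V => r * E V) W = r • matrixGradient E W := by
  ext i j
  exact DFunLike.congr_fun (hE.hasFDerivAt.const_mul r).fderiv _

noncomputable def Matrix.mulVecCLM (a : n → ℝ) : Matrix m n ℝ →L[ℝ] EuclideanSpace ℝ m :=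
  LinearMap.toContinuousLinearMap
    ((WithLp.linearEquiv 2 ℝ (m → ℝ)).symm.toLinearMap ∘ₗ (mulVecBilin ℝ ℝ).flip a)

theorem Matrix.mulVecCLM_apply (a : n → ℝ) (W : Matrix m n ℝ) :
    mulVecCLM a W = (EuclideanSpace.equiv m ℝ).symm (W *ᵥ a) := rfl

theorem Matrix.inner_mulVecCLM_single [DecidableEq m] [DecidableEq n]
    (x : EuclideanSpace ℝ m) (a : n → ℝ) (i : m) (j : n) :
    inner ℝ x (mulVecCLM a (single i j 1)) = x i * a j := by
  rw [mulVecCLM_apply, single_mulVec]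
  simp [PiLp.inner_apply, Function.update_apply, mul_comm]

theorem hasFDerivAt_sum_norm_sub_mulVecCLM_sq (b : ι → EuclideanSpace ℝ m) (a : ι → n → ℝ)
    (W : Matrix m n ℝ) :
    HasFDerivAt (fun V => ∑ t, ‖b t - mulVecCLM (a t) V‖ ^ 2)
      (∑ t, 2 • (innerSL ℝ (b t - mulVecCLM (a t) W)).comp (-mulVecCLM (a t))) W :=
  HasFDerivAt.fun_sum fun t _ => ((mulVecCLM (a t)).hasFDerivAt.const_sub (b t)).norm_sq

theorem matrixGradient_sum_norm_sub_mulVecCLM_sq [DecidableEq m] [DecidableEq n]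
    (b : ι → EuclideanSpace ℝ m) (a : ι → n → ℝ) (W : Matrix m n ℝ) :
    matrixGradient (fun V => ∑ t, ‖b t - mulVecCLM (a t) V‖ ^ 2) W =
      (2 : ℝ) • ∑ t, vecMulVec (W *ᵥ a t - (b t).ofLp) (a t) := by
  ext i j
  rw [matrixGradient, of_apply, (hasFDerivAt_sum_norm_sub_mulVecCLM_sq b a W).fderiv]
  simp only [_root_.sum_apply, _root_.smul_apply, ContinuousLinearMap.comp_apply,
    _root_.neg_apply, innerSL_apply_apply, inner_neg_right, inner_mulVecCLM_single]
  simp only [Matrix.smul_apply, Matrix.sum_apply, vecMulVec_apply, Finset.mul_sum,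
    PiLp.sub_apply, Pi.sub_apply, mulVecCLM_apply, PiLp.continuousLinearEquiv_symm_apply,
    smul_eq_mul, nsmul_eq_mul, Nat.cast_ofNat]
  exact Finset.sum_congr rfl fun t _ => by ring

end LeastSquares

section Algebra

variable {G l m n p : Type*} [Fintype G] [AddGroup G] [Fintype m] [Fintype n]

theorem Matrix.vecMulVec_mulVec_right {R : Type*} [CommSemiring R] (u : l → R)
    (N : Matrix p n R) (v : n → R) : vecMulVec u (N *ᵥ v) = vecMulVec u v * Nᵀ := by
  rw [vecMulVec_mul, vecMul_transpose]

theorem sum_vecMulVec_shifted_residual {k : Type*} [Fintype k] (WGa : Matrix m k ℝ)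
    (WA : Matrix k n ℝ) (WGh : Matrix m m ℝ) (h : G → m → ℝ) (c : G → n → ℝ) (s : G) :
    ∑ t, vecMulVec (WGa *ᵥ (WA *ᵥ c (t - s)) - (h t - WGh *ᵥ h (t - s))) (WA *ᵥ c (t - s)) =
      WGa * WA * (∑ t, vecMulVec (c t) (c t)) * WAᵀ - (∑ t, vecMulVec (h t) (c (t - s))) * WAᵀ
        + WGh * (∑ t, vecMulVec (h t) (c t)) * WAᵀ := by
  have shift_cc : ∑ t, vecMulVec (c (t - s)) (c (t - s)) = ∑ t, vecMulVec (c t) (c t) :=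
    (Equiv.subRight s).sum_comp fun t => vecMulVec (c t) (c t)
  have shift_hc : ∑ t, vecMulVec (h (t - s)) (c (t - s)) = ∑ t, vecMulVec (h t) (c t) :=
    (Equiv.subRight s).sum_comp fun t => vecMulVec (h t) (c t)
  rw [← shift_cc, ← shift_hc]
  simp only [sub_vecMulVec, Finset.sum_sub_distrib]
  simp only [Matrix.mul_sum, Matrix.sum_mul, vecMulVec_mulVec_right, ← mul_vecMulVec,
    Matrix.mul_assoc]
  abel

end Algebra

theorem rjepa_gradient_WGa_general
    (T dH dL dA : ℕ) [NeZero T]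
    (h : ZMod T → EuclideanSpace ℝ (Fin dH))
    (c : ZMod T → Fin dL → ℝ)
    (WA : Matrix (Fin dA) (Fin dL) ℝ)
    (WGh : Matrix (Fin dH) (Fin dH) ℝ)
    (lam1 : ℝ)
    (E : Matrix (Fin dH) (Fin dA) ℝ → ℝ)
    (hE : ∀ WGa, E WGa = (lam1 / 2) * ((1 / (T : ℝ)) *
      ∑ t, ‖h t - (EuclideanSpace.equiv (Fin dH) ℝ).symm
          (WGh.mulVec (h (t - 1)) + WGa.mulVec (WA.mulVec (c (t - 1))))‖ ^ 2))
    (RcL : Matrix (Fin dL) (Fin dL) ℝ)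
    (P Q : Matrix (Fin dH) (Fin dL) ℝ)
    (hRcL : RcL = (1 / (T : ℝ)) • ∑ t, Matrix.vecMulVec (c t) (c t))
    (hP : P = (1 / (T : ℝ)) • ∑ t, Matrix.vecMulVec (h t) (c (t - 1)))
    (hQ : Q = (1 / (T : ℝ)) • ∑ t, Matrix.vecMulVec (h t) (c t)) :
    ∀ WGa : Matrix (Fin dH) (Fin dA) ℝ,
      (Matrix.of fun i j => fderiv ℝ E WGa (Matrix.single i j 1)) =
        lam1 • (WGa * WA * RcL * WAᵀ - P * WAᵀ + WGh * Q * WAᵀ) := by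
  intro WGa
  set a : ZMod T → Fin dA → ℝ := fun t => WA *ᵥ c (t - 1)
  set b : ZMod T → EuclideanSpace ℝ (Fin dH) :=
    fun t => h t - (EuclideanSpace.equiv (Fin dH) ℝ).symm (WGh *ᵥ h (t - 1))
  have hE_lsq : E = fun W => (lam1 / 2 * (1 / (T : ℝ))) * ∑ t, ‖b t - mulVecCLM (a t) W‖ ^ 2 := by
    funext W
    simp only [hE, b, a, mulVecCLM_apply, map_add, sub_add_eq_sub_sub, mul_assoc]
  have hdiff := (hasFDerivAt_sum_norm_sub_mulVecCLM_sq b a WGa).differentiableAt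
  change matrixGradient E WGa = _
  rw [hE_lsq, matrixGradient_const_mul hdiff, matrixGradient_sum_norm_sub_mulVecCLM_sq, smul_smul,
    hRcL, hP, hQ, show lam1 / 2 * (1 / (T : ℝ)) * 2 = lam1 * (1 / T) by ring, ← smul_smul]
  have hb : ∀ t, (b t).ofLp = (h t).ofLp - WGh *ᵥ (h (t - 1)).ofLp := fun t => rfl
  simp only [hb, a, sum_vecMulVec_shifted_residual, Matrix.mul_smul, Matrix.smul_mul, smul_sub,
    smul_add]

/-- Appendix A.1: gradient of the R-JEPA loss with respect to the action-branch
predictor weight `W_Ga`: `∂E/∂W_Ga = λ₁ (W_Ga W_A R_cL W_Aᵀ − P W_Aᵀ + W_Gh Q W_Aᵀ)`,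
where `R_cL` is the covariance of the low-level context and `P, Q` are
cross-correlation matrices, with cyclic time indexing mod `T`. -/
theorem rjepa_gradient_WGa
    (T dH dL dA : ℕ) [NeZero T] (hdH : 0 < dH) (hdL : 0 < dL) (hdA : 0 < dA)
    (h : ZMod T → EuclideanSpace ℝ (Fin dH))
    (c : ZMod T → Fin dL → ℝ)
    (WA : Matrix (Fin dA) (Fin dL) ℝ)
    (WGh : Matrix (Fin dH) (Fin dH) ℝ)
    (lam1 : ℝ) (hlam : 0 < lam1)
    (E : Matrix (Fin dH) (Fin dA) ℝ → ℝ)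
    (hE : ∀ WGa, E WGa = (lam1 / 2) * ((1 / (T : ℝ)) *
      ∑ t, ‖h t - (EuclideanSpace.equiv (Fin dH) ℝ).symm
          (WGh.mulVec (h (t - 1)) + WGa.mulVec (WA.mulVec (c (t - 1))))‖ ^ 2))
    (RcL : Matrix (Fin dL) (Fin dL) ℝ)
    (P Q : Matrix (Fin dH) (Fin dL) ℝ)
    (hRcL : RcL = (1 / (T : ℝ)) • ∑ t, Matrix.vecMulVec (c t) (c t))
    (hP : P = (1 / (T : ℝ)) • ∑ t, Matrix.vecMulVec (h t) (c (t - 1)))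
    (hQ : Q = (1 / (T : ℝ)) • ∑ t, Matrix.vecMulVec (h t) (c t)) :
    ∀ WGa : Matrix (Fin dH) (Fin dA) ℝ,
      (Matrix.of fun i j => fderiv ℝ E WGa (Matrix.single i j 1)) =
        lam1 • (WGa * WA * RcL * WAᵀ - P * WAᵀ + WGh * Q * WAᵀ) :=
  rjepa_gradient_WGa_general T dH dL dA h c WA WGh lam1 E hE RcL P Q hRcL hP hQ
end
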